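/- For all nonnegative integers h and k, the q-Delannoy number admits the alternative closed form D_q(h,k) = Σ_{j=0}^{h} q^{(h−j)(k−j)} (−q;q)_j [k choose j]_q [h choose j]_q, where (−q;q)_j = Π_{i=1}^{j} (1 + q^i). This is an identity of polynomials in ℤ[q]. -/
import Mathlib


open Polynomial Finset

/-- The Gaussian (q-)binomial coefficient `[h choose k]_q` as a polynomial in `ℤ[q]`,
defined via the q-Pascal recurrence; it equals
`([h]_q [h−1]_q ⋯ [h−k+1]_q)/([k]_q ⋯ [1]_q)`. -/
noncomputable def qBinom : ℕ → ℕ → Polynomial ℤ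
  | _, 0 => 1
  | 0, _ + 1 => 0
  | h + 1, k + 1 => qBinom h k + Polynomial.X ^ (k + 1) * qBinom h (k + 1)

/-- The q-Delannoy number `D_q(h,k) = Σ_{j=0}^{h} q^{binom(j+1,2)} [k choose j]_q
[h+k−j choose k]_q`. -/
noncomputable def qDelannoy (h k : ℕ) : Polynomial ℤ :=
  ∑ j ∈ Finset.range (h + 1),
    Polynomial.X ^ ((j + 1).choose 2) * qBinom k j * qBinom (h + k - j) k

/-- The Delannoy number `D(h,k) = Σ_{j=0}^{h} binom(k,j) binom(h+k−j,k)`. -/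
def delannoy (h k : ℕ) : ℕ :=
  ∑ j ∈ Finset.range (h + 1), k.choose j * (h + k - j).choose k

/-- The q-Pochhammer symbol `(−q;q)_j = Π_{i=1}^{j} (1 + q^i)` in `ℤ[q]`. -/
noncomputable def qPoch (j : ℕ) : Polynomial ℤ :=
  ∏ i ∈ Finset.range j, (1 + Polynomial.X ^ (i + 1))

noncomputable def qNat (m : ℕ) : Polynomial ℤ := ∑ t ∈ Finset.range m, Polynomial.X ^ t

noncomputable def qFact (n : ℕ) : Polynomial ℤ := ∏ i ∈ Finset.range n, qNat (i + 1)

lemma qBinom_zero_right (n : ℕ) : qBinom n 0 = 1 := by cases n <;> rfl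

lemma qBinom_succ_succ (h k : ℕ) :
    qBinom (h+1) (k+1) = qBinom h k + X ^ (k+1) * qBinom h (k+1) := rfl

lemma qBinom_eq_zero : ∀ n k : ℕ, n < k → qBinom n k = 0 := by
  intro n
  induction n with
  | zero =>
    intro k hk
    cases k with
    | zero => omega
    | succ j => rfl
  | succ n ih =>
    intro k hk
    cases k with
    | zero => omega
    | succ j =>
      rw [qBinom_succ_succ, ih j (by omega), ih (j+1) (by omega)]
      ring

lemma qBinom_self : ∀ n : ℕ, qBinom n n = 1 := by
  intro n
  induction n with
  | zero => rfl
  | succ n ih => rw [qBinom_succ_succ, ih, qBinom_eq_zero n (n+1) (by omega)]; ring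

lemma qNat_add (a b : ℕ) : qNat (a + b) = qNat a + X ^ a * qNat b := by
  simp only [qNat, Finset.sum_range_add, pow_add, Finset.mul_sum]

lemma qFact_succ (n : ℕ) : qFact (n+1) = qFact n * qNat (n+1) := Finset.prod_range_succ _ _

lemma qBinom_mul_qFact : ∀ n k : ℕ, k ≤ n → qBinom n k * (qFact k * qFact (n - k)) = qFact n := by
  intro n
  induction n with
  | zero =>
    intro k hk
    interval_cases k
    simp [qBinom_zero_right, qFact]
  | succ n ih =>
    intro k hk
    cases k with
    | zero => simp [qBinom_zero_right, qFact]
    | succ t =>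
      rcases Nat.lt_or_ge t n with hlt | hge
      · have e1 : n + 1 - (t + 1) = (n - (t + 1)) + 1 := by omega
        have h1 := ih t (by omega)
        have h2 := ih (t+1) (by omega)
        have hq : qNat (n+1) = qNat (t+1) + X ^ (t+1) * qNat (n - t) := by
          rw [show n + 1 = (t+1) + (n - t) by omega]; exact qNat_add _ _
        rw [qFact_succ t] at h2
        rw [show n - t = n - (t+1) + 1 by omega, qFact_succ] at h1
        rw [qBinom_succ_succ, e1, qFact_succ n, qFact_succ t, qFact_succ (n - (t+1)), hq,
          show n - t = n - (t+1) + 1 by omega]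
        linear_combination qNat (t+1) * h1 + X^(t+1) * qNat (n - (t+1) + 1) * h2
      · have : t = n := by omega
        subst this
        simp [qBinom_self, qFact_succ, qFact]

lemma qNat_eval_one (m : ℕ) : (qNat m).eval 1 = m := by simp [qNat]

lemma qFact_eval_one (n : ℕ) : (qFact n).eval 1 = (n.factorial : ℤ) := by
  induction n with
  | zero => simp [qFact]
  | succ n ih =>
    rw [qFact_succ, eval_mul, ih, qNat_eval_one, Nat.factorial_succ]
    push_cast
    ring

lemma qFact_ne_zero (n : ℕ) : qFact n ≠ 0 := by
  intro h
  have := qFact_eval_one n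
  rw [h] at this
  simp at this
  exact Nat.factorial_ne_zero n (by exact_mod_cast this.symm)

lemma qBinom_symm (n k : ℕ) (hk : k ≤ n) : qBinom n (n - k) = qBinom n k := by
  have h1 := qBinom_mul_qFact n k hk
  have h2 := qBinom_mul_qFact n (n - k) (Nat.sub_le _ _)
  rw [Nat.sub_sub_self hk] at h2
  have := h2.trans h1.symm
  have hne : qFact k * qFact (n - k) ≠ 0 :=
    mul_ne_zero (qFact_ne_zero _) (qFact_ne_zero _)
  apply mul_right_cancel₀ hne
  rw [h1, ← h2]
  ring

lemma qBinom_pascal2 (n k : ℕ) (hk : k ≤ n) :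
    qBinom (n+1) (k+1) = qBinom n (k+1) + X ^ (n - k) * qBinom n k := by
  rcases Nat.lt_or_ge k n with hlt | hge
  · have e1 : n + 1 - (k + 1) = (n - (k+1)) + 1 := by omega
    calc qBinom (n+1) (k+1) = qBinom (n+1) ((n+1) - (k+1)) := (qBinom_symm _ _ (by omega)).symm
    _ = qBinom (n+1) ((n - (k+1)) + 1) := by rw [e1]
    _ = qBinom n (n - (k+1)) + X ^ (n - (k+1) + 1) * qBinom n (n - (k+1) + 1) := qBinom_succ_succ _ _
    _ = qBinom n (k+1) + X ^ (n - k) * qBinom n k := by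
        have a1 : qBinom n (n - (k+1)) = qBinom n (k+1) := qBinom_symm n (k+1) (by omega)
        have a2 : qBinom n (n - k) = qBinom n k := qBinom_symm n k (by omega)
        rw [show n - (k+1) + 1 = n - k by omega, a1, a2]
  · have hkn : k = n := by omega
    subst hkn
    rw [qBinom_self, qBinom_eq_zero k (k+1) (by omega), Nat.sub_self]
    simp [qBinom_self]

lemma qBinom_trinom (i j kk : ℕ) (hj : j ≤ i) (hi : i ≤ kk) :
    qBinom kk j * qBinom (kk - j) (i - j) = qBinom kk i * qBinom i j := by
  have hne : qFact j * qFact (i - j) * qFact (kk - i) ≠ 0 :=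
    mul_ne_zero (mul_ne_zero (qFact_ne_zero _) (qFact_ne_zero _)) (qFact_ne_zero _)
  apply mul_right_cancel₀ hne
  have e1 : (kk - j) - (i - j) = kk - i := by omega
  have h1 := qBinom_mul_qFact kk j (by omega)
  have h2 := qBinom_mul_qFact (kk - j) (i - j) (by omega)
  rw [e1] at h2
  have h3 := qBinom_mul_qFact kk i hi
  have h4 := qBinom_mul_qFact i j hj
  calc qBinom kk j * qBinom (kk - j) (i - j) * (qFact j * qFact (i - j) * qFact (kk - i))
      = (qBinom (kk - j) (i - j) * (qFact (i - j) * qFact (kk - i))) * (qBinom kk j * qFact j) := by ring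
    _ = qFact (kk - j) * (qBinom kk j * qFact j) := by rw [h2]
    _ = qBinom kk j * (qFact j * qFact (kk - j)) := by ring
    _ = qFact kk := h1
    _ = qBinom kk i * (qFact i * qFact (kk - i)) := h3.symm
    _ = (qBinom i j * (qFact j * qFact (i - j))) * qBinom kk i * qFact (kk - i) := by
        rw [h4]; ring
    _ = qBinom kk i * qBinom i j * (qFact j * qFact (i - j) * qFact (kk - i)) := by ring


lemma qBinom_pascal2' (n k : ℕ) :
    qBinom (n+1) (k+1) = qBinom n (k+1) + X ^ (n - k) * qBinom n k := by
  rcases le_or_gt k n with hk | hk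
  · exact qBinom_pascal2 n k hk
  · rw [qBinom_eq_zero (n+1) (k+1) (by omega), qBinom_eq_zero n (k+1) (by omega),
      qBinom_eq_zero n k (by omega)]
    ring

lemma qPoch_succ (n : ℕ) : qPoch (n+1) = qPoch n * (1 + X ^ (n+1)) :=
  Finset.prod_range_succ _ _

lemma qPoch_sum (n : ℕ) :
    (∑ j ∈ Finset.range (n+1), X ^ ((j+1).choose 2) * qBinom n j) = qPoch n := by
  induction n with
  | zero => simp [qPoch, qBinom_zero_right]
  | succ n ih =>
    rw [Finset.sum_range_succ' (fun j => X ^ ((j+1).choose 2) * qBinom (n+1) j) (n+1)]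
    have hterm : ∀ j ∈ Finset.range (n+1),
        X ^ ((j+1+1).choose 2) * qBinom (n+1) (j+1)
          = X ^ ((j+1+1).choose 2) * qBinom n (j+1)
            + X ^ ((j+1).choose 2 + (n+1)) * qBinom n j := by
      intro j hj
      rw [Finset.mem_range] at hj
      rw [qBinom_pascal2' n j]
      have e : (j+1+1).choose 2 + (n - j) = (j+1).choose 2 + (n+1) := by
        have h2 : (j+1+1).choose 2 = (j+1).choose 1 + (j+1).choose 2 :=
          Nat.choose_succ_succ (j+1) 1
        rw [Nat.choose_one_right] at h2
        omega
      rw [mul_add, ← mul_assoc, ← pow_add, e]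
    rw [Finset.sum_congr rfl hterm, Finset.sum_add_distrib]
    have hS2 : (∑ j ∈ Finset.range (n+1), X ^ ((j+1).choose 2 + (n+1)) * qBinom n j)
        = X ^ (n+1) * qPoch n := by
      rw [← ih, Finset.mul_sum]
      refine Finset.sum_congr rfl fun j hj => ?_
      rw [pow_add]; ring
    have hS1 : (∑ j ∈ Finset.range (n+1), X ^ ((j+1+1).choose 2) * qBinom n (j+1))
        + X ^ ((0+1).choose 2) * qBinom (n+1) 0 = qPoch n := by
      have hs := Finset.sum_range_succ' (fun j => X ^ ((j+1).choose 2) * qBinom n j) (n+1)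
      rw [Finset.sum_range_succ (fun j => X ^ ((j+1).choose 2) * qBinom n j) (n+1), ih,
        qBinom_eq_zero n (n+1) (by omega), mul_zero, add_zero] at hs
      rw [qBinom_zero_right, mul_one]
      rw [qBinom_zero_right, mul_one] at hs
      linear_combination -hs
    rw [hS2, add_right_comm, hS1, qPoch_succ]
    ring

lemma qVandermonde (m : ℕ) : ∀ n r : ℕ, qBinom (m + n) r =
    ∑ i ∈ Finset.range (r+1), X ^ ((m - i) * (r - i)) * qBinom m i * qBinom n (r - i) := by
  intro n
  induction n with
  | zero =>
    intro r
    rw [Nat.add_zero, Finset.sum_range_succ]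
    have hz : ∀ i ∈ Finset.range r,
        X ^ ((m - i) * (r - i)) * qBinom m i * qBinom 0 (r - i) = 0 := by
      intro i hi
      rw [Finset.mem_range] at hi
      rw [qBinom_eq_zero 0 (r - i) (by omega)]
      ring
    rw [Finset.sum_eq_zero hz, Nat.sub_self]
    simp [qBinom_zero_right]
  | succ n ih =>
    intro r
    cases r with
    | zero => simp [qBinom_zero_right]
    | succ s =>
      rw [show m + (n+1) = (m+n) + 1 by omega]
      by_cases hs : s ≤ m + n
      · rw [qBinom_pascal2' (m+n) s, ih (s+1), ih s]
        have hterm : ∀ i ∈ Finset.range (s+1),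
            X ^ ((m - i) * (s+1 - i)) * qBinom m i * qBinom (n+1) (s+1-i)
              = X ^ ((m - i) * (s+1 - i)) * qBinom m i * qBinom n (s+1-i)
                + X ^ (m+n-s) * (X ^ ((m - i) * (s - i)) * qBinom m i * qBinom n (s-i)) := by
          intro i hi
          rw [Finset.mem_range] at hi
          have e1 : s + 1 - i = (s - i) + 1 := by omega
          rw [e1, qBinom_pascal2' n (s-i)]
          by_cases him : i ≤ m
          · by_cases hsn : s - i ≤ n
            · have eexp : (m - i) * (s - i + 1) + (n - (s - i))
                  = m + n - s + (m - i) * (s - i) := by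
                rw [Nat.mul_succ]
                generalize (m - i) * (s - i) = a
                omega
              have hx : (X : Polynomial ℤ) ^ ((m - i) * (s - i + 1)) * X ^ (n - (s - i))
                  = X ^ (m+n-s) * X ^ ((m - i) * (s - i)) := by
                rw [← pow_add, ← pow_add, eexp]
              linear_combination qBinom m i * qBinom n (s - i) * hx
            · rw [qBinom_eq_zero n (s - i + 1) (by omega),
                qBinom_eq_zero n (s - i) (by omega)]
              ring
          · rw [qBinom_eq_zero m i (by omega)]
            ring
        have A := Finset.sum_range_succ
          (fun i => X ^ ((m - i) * (s+1 - i)) * qBinom m i * qBinom (n+1) (s+1-i)) (s+1)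
        have B := Finset.sum_range_succ
          (fun i => X ^ ((m - i) * (s+1 - i)) * qBinom m i * qBinom n (s+1-i)) (s+1)
        rw [A, B, Finset.mul_sum, Finset.sum_congr rfl hterm, Finset.sum_add_distrib]
        simp only [Nat.sub_self, mul_zero, pow_zero, qBinom_zero_right, mul_one, one_mul]
        ring
      · rw [qBinom_eq_zero (m+n+1) (s+1) (by omega)]
        symm
        apply Finset.sum_eq_zero
        intro i hi
        rw [Finset.mem_range] at hi
        by_cases him : i ≤ m
        · rw [qBinom_eq_zero (n+1) (s+1-i) (by omega)]
          ring
        · rw [qBinom_eq_zero m i (by omega)]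
          ring

theorem qDelannoy_closed_form (h k : ℕ) :
    qDelannoy h k =
      ∑ j ∈ Finset.range (h + 1),
        Polynomial.X ^ ((h - j) * (k - j)) * qPoch j * qBinom k j * qBinom h j := by
  have step1 : ∀ j ∈ Finset.range (h+1),
      X ^ ((j+1).choose 2) * qBinom k j * qBinom (h + k - j) k
        = ∑ i ∈ Finset.range (k+1), X ^ ((j+1).choose 2) * qBinom k j *
            (X ^ ((h-i)*(k-i)) * qBinom h i * qBinom (k-j) (k-i)) := by
    intro j hj
    by_cases hjk : j ≤ k
    · rw [show h + k - j = h + (k-j) by omega, qVandermonde h (k-j) k, Finset.mul_sum]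
    · rw [qBinom_eq_zero k j (by omega)]
      simp
  have step2 : ∀ i ∈ Finset.range (k+1), i ≤ h →
      (∑ j ∈ Finset.range (h+1), X ^ ((j+1).choose 2) * qBinom k j *
          (X ^ ((h-i)*(k-i)) * qBinom h i * qBinom (k-j) (k-i)))
        = X ^ ((h-i)*(k-i)) * qPoch i * qBinom k i * qBinom h i := by
    intro i hi hih
    rw [Finset.mem_range] at hi
    have t1 : ∀ j ∈ Finset.range (h+1),
        X ^ ((j+1).choose 2) * qBinom k j *
            (X ^ ((h-i)*(k-i)) * qBinom h i * qBinom (k-j) (k-i))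
          = (X ^ ((h-i)*(k-i)) * qBinom k i * qBinom h i) *
              (X ^ ((j+1).choose 2) * qBinom i j) := by
      intro j hj
      have key : qBinom k j * qBinom (k-j) (k-i) = qBinom k i * qBinom i j := by
        by_cases hji : j ≤ i
        · have e : k - i = (k - j) - (i - j) := by omega
          rw [e, qBinom_symm (k-j) (i-j) (by omega), qBinom_trinom i j k hji (by omega)]
        · rw [qBinom_eq_zero i j (by omega)]
          by_cases hjk : j ≤ k
          · rw [qBinom_eq_zero (k-j) (k-i) (by omega)]; ring
          · rw [qBinom_eq_zero k j (by omega)]; ring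
      linear_combination X ^ ((j+1).choose 2) * X ^ ((h-i)*(k-i)) * qBinom h i * key
    rw [Finset.sum_congr rfl t1, ← Finset.mul_sum]
    have hsub : (∑ j ∈ Finset.range (h+1), X ^ ((j+1).choose 2) * qBinom i j) = qPoch i := by
      rw [← qPoch_sum i]
      symm
      apply Finset.sum_subset
      · intro x hx
        rw [Finset.mem_range] at *
        omega
      · intro x hx1 hx2
        rw [Finset.mem_range] at hx1 hx2
        rw [qBinom_eq_zero i x (by omega)]
        ring
    rw [hsub]
    ring
  have step2' : ∀ i ∈ Finset.range (k+1),
      (∑ j ∈ Finset.range (h+1), X ^ ((j+1).choose 2) * qBinom k j *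
          (X ^ ((h-i)*(k-i)) * qBinom h i * qBinom (k-j) (k-i)))
        = X ^ ((h-i)*(k-i)) * qPoch i * qBinom k i * qBinom h i := by
    intro i hi
    by_cases hih : i ≤ h
    · exact step2 i hi hih
    · have hz : qBinom h i = 0 := qBinom_eq_zero h i (by omega)
      rw [hz]
      simp
  rw [qDelannoy, Finset.sum_congr rfl step1, Finset.sum_comm, Finset.sum_congr rfl step2']
  rcases le_total h k with hhk | hhk
  · symm
    apply Finset.sum_subset
    · intro x hx
      rw [Finset.mem_range] at *
      omega
    · intro x hx1 hx2
      rw [Finset.mem_range] at hx1 hx2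
      rw [qBinom_eq_zero h x (by omega)]
      ring
  · apply Finset.sum_subset
    · intro x hx
      rw [Finset.mem_range] at *
      omega
    · intro x hx1 hx2
      rw [Finset.mem_range] at hx1 hx2
      rw [qBinom_eq_zero k x (by omega)]
      ring
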